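/- Let n ≥ 4 and let G be a finite connected simple graph not isomorphic to K2. Then G contains an induced cycle on n vertices if and only if the reduction of G contains an induced cycle on n vertices. -/

import Mathlib

open SimpleGraph

universe u

/-- The closed neighborhood of a vertex. -/
def closedNbhd {V : Type u} (G : SimpleGraph V) (v : V) : Set V :=
  insert v (G.neighborSet v)

/-- Two vertices are siblings if they share the same closed neighborhood. -/
def Sibling {V : Type u} (G : SimpleGraph V) (u v : V) : Prop :=
  closedNbhd G u = closedNbhd G v

/-- A leaf is a vertex of degree one. -/
def IsLeaf {V : Type u} (G : SimpleGraph V) (v : V) : Prop :=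
  Nat.card (G.neighborSet v) = 1

/-- The tuft number: the maximal number of leaves adjacent to a single vertex. -/
noncomputable def tuftNumber {V : Type u} (G : SimpleGraph V) : ℕ :=
  ⨆ v : V, Nat.card {u | IsLeaf G u ∧ G.Adj v u}

/-- The sibling number: the maximum over vertices `v` of the number of vertices sharing
the closed neighborhood of `v`, minus one. -/
noncomputable def siblingNumber {V : Type u} (G : SimpleGraph V) : ℕ :=
  ⨆ v : V, (Nat.card {u | Sibling G u v} - 1)

/-- The complete graph on two vertices. -/
def K2 : SimpleGraph (Fin 2) := ⊤

/-- The sibling relation as a setoid. -/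
def siblingSetoid {V : Type u} (G : SimpleGraph V) : Setoid V :=
  ⟨Sibling G, ⟨fun _ => rfl, fun {_ _} h => Eq.symm h, fun {_ _ _} h h' => Eq.trans h h'⟩⟩

/-- `rho G` is the quotient of `G` by the sibling relation: vertices are sibling
equivalence classes, two distinct classes being adjacent iff some pair of
representatives is adjacent. -/
def rho {V : Type u} (G : SimpleGraph V) : SimpleGraph (Quotient (siblingSetoid G)) where
  Adj A B := A ≠ B ∧ ∃ u v : V, Quotient.mk (siblingSetoid G) u = A ∧
      Quotient.mk (siblingSetoid G) v = B ∧ G.Adj u v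
  symm := by
    constructor
    rintro A B ⟨hne, u, v, hu, hv, h⟩
    exact ⟨hne.symm, v, u, hv, hu, h.symm⟩
  loopless := by
    constructor
    rintro A ⟨hne, -⟩
    exact hne rfl

/-- `lamS G S` is the induced subgraph on the complement of `S`. -/
def lamS {V : Type u} (G : SimpleGraph V) (S : Set V) : SimpleGraph ↥(Sᶜ) :=
  SimpleGraph.induce Sᶜ G

/-- `lam G` is the induced subgraph on the set of non-leaf vertices. -/
def lam {V : Type u} (G : SimpleGraph V) : SimpleGraph ↥{v : V | ¬ IsLeaf G v} :=
  SimpleGraph.induce {v : V | ¬ IsLeaf G v} G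

/-- A finite graph, bundled with its vertex type. -/
structure FinGraph : Type (u + 1) where
  V : Type u
  [finite : Finite V]
  G : SimpleGraph V

attribute [instance] FinGraph.finite

/-- One reduction step: remove all leaves, then contract each sibling class to a point. -/
def redStep (X : FinGraph.{u}) : FinGraph.{u} :=
  ⟨Quotient (siblingSetoid (lam X.G)), rho (lam X.G)⟩

/-- The reduction of a finite graph: iterate `redStep` until it stabilizes (up to
isomorphism this happens after at most `Nat.card X.V` steps). -/
noncomputable def reduction (X : FinGraph.{u}) : FinGraph.{u} :=
  redStep^[Nat.card X.V] X

/-- `G` contains an induced cycle on `n` vertices. -/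
def HasInducedCycle {V : Type u} (G : SimpleGraph V) (n : ℕ) : Prop :=
  ∃ s : Set V, Nonempty (SimpleGraph.induce s G ≃g cycleGraph n)

/-- A graph is chordal if it has no induced cycle on four or more vertices. -/
def Chordal {V : Type u} (G : SimpleGraph V) : Prop :=
  ∀ m : ℕ, 4 ≤ m → ¬ HasInducedCycle G m

/-- The setoid identifying isomorphic graphs on `Fin n` satisfying a property `P`. -/
def graphSetoid (n : ℕ) (P : SimpleGraph (Fin n) → Prop) :
    Setoid {G : SimpleGraph (Fin n) // P G} :=
  ⟨fun G H => Nonempty (G.1 ≃g H.1),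
    ⟨fun _ => ⟨Iso.refl⟩, fun ⟨e⟩ => ⟨e.symm⟩, fun ⟨e⟩ ⟨f⟩ => ⟨e.trans f⟩⟩⟩

/-- The number of isomorphism classes of graphs on `n` vertices satisfying `P`. -/
noncomputable def numClasses (n : ℕ) (P : SimpleGraph (Fin n) → Prop) : ℕ :=
  Nat.card (Quotient (graphSetoid n P))

/-! Choosing a representative of each sibling class embeds `rho G` into `G` as an induced
subgraph, and `lam G` is an induced subgraph of `G`, so a reduction step creates no induced
cycles. Conversely, an induced copy of a graph `H` survives a reduction step as soon as every
vertex of `H` has two neighbours (then it meets no leaf of `G`) and `H` has no siblings (then its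
vertices lie in distinct sibling classes, and adjacency between distinct classes is read off any
representatives). Cycles on at least four vertices are such graphs. -/

namespace SimpleGraph

variable {V W : Type*} {G : SimpleGraph V} {H : SimpleGraph W}

lemma mem_closedNbhd {u v : V} : v ∈ closedNbhd G u ↔ v = u ∨ G.Adj u v := Iff.rfl

lemma mem_closedNbhd_comm {u v : V} : v ∈ closedNbhd G u ↔ u ∈ closedNbhd G v := by
  simp only [mem_closedNbhd, eq_comm, G.adj_comm]

lemma Sibling.mem_closedNbhd_iff {u v v' : V} (h : Sibling G v v') :
    v ∈ closedNbhd G u ↔ v' ∈ closedNbhd G u := by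
  rw [mem_closedNbhd_comm, h, mem_closedNbhd_comm]

lemma Embedding.preimage_closedNbhd (f : H ↪g G) (a : W) :
    f ⁻¹' closedNbhd G (f a) = closedNbhd H a := by
  ext b
  simp only [Set.mem_preimage, mem_closedNbhd, f.injective.eq_iff, f.map_adj_iff]

lemma Sibling.of_embedding (f : H ↪g G) {a b : W} (h : Sibling G (f a) (f b)) :
    Sibling H a b := by
  rw [Sibling, ← f.preimage_closedNbhd, ← f.preimage_closedNbhd, h]

lemma not_isLeaf_of_neighborSet_nontrivial {v : V} (h : (G.neighborSet v).Nontrivial) :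
    ¬ IsLeaf G v :=
  fun hv => h.not_subsingleton (Set.subsingleton_coe _ |>.1 (Nat.card_eq_one_iff_unique.1 hv).1)

lemma mk_eq_mk_iff_sibling {u v : V} :
    (⟦u⟧ : Quotient (siblingSetoid G)) = ⟦v⟧ ↔ Sibling G u v := Quotient.eq

lemma rho_adj_mk_iff {u v : V} :
    (rho G).Adj ⟦u⟧ ⟦v⟧ ↔ G.Adj u v ∧ ¬ Sibling G u v := by
  refine ⟨fun ⟨hne, u', v', hu, hv, h⟩ => ?_,
    fun ⟨h, hs⟩ => ⟨mt mk_eq_mk_iff_sibling.1 hs, u, v, rfl, rfl, h⟩⟩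
  have hs : ¬ Sibling G u v := mt mk_eq_mk_iff_sibling.2 hne
  have hu' : Sibling G u' u := mk_eq_mk_iff_sibling.1 hu
  have hv' : Sibling G v' v := mk_eq_mk_iff_sibling.1 hv
  -- `v ∈ closedNbhd G u` is invariant under replacing `u` or `v` by a sibling
  have hvu : v ∈ closedNbhd G u := by
    rw [← hv'.mem_closedNbhd_iff, ← hu']
    exact Or.inr h
  exact ⟨hvu.resolve_left fun h => hs (h ▸ rfl), hs⟩

variable (G) in
noncomputable def rhoEmbedding : rho G ↪g G where
  toFun := Quotient.out
  inj' := Quotient.out_injective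
  map_rel_iff' {A B} := by
    conv_rhs => rw [← Quotient.out_eq A, ← Quotient.out_eq B, rho_adj_mk_iff]
    refine ⟨fun h => ⟨h, fun hs => G.loopless.irrefl A.out ?_⟩, And.left⟩
    have hAB : A = B := by simpa only [Quotient.out_eq] using mk_eq_mk_iff_sibling.2 hs
    subst hAB
    exact h

def Embedding.toRho (f : H ↪g G) (hsib : ∀ a b, Sibling H a b → a = b) : H ↪g rho G where
  toFun a := ⟦f a⟧
  inj' a b h := hsib a b (.of_embedding f (mk_eq_mk_iff_sibling.1 h))
  map_rel_iff' {a b} := by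
    change (rho G).Adj ⟦f a⟧ ⟦f b⟧ ↔ _
    rw [rho_adj_mk_iff, f.map_adj_iff]
    exact ⟨And.left, fun h => ⟨h, fun hs => H.ne_of_adj h (hsib a b (.of_embedding f hs))⟩⟩

def Embedding.codRestrict (f : H ↪g G) {s : Set V} (hs : ∀ a, f a ∈ s) : H ↪g G.induce s where
  toFun a := ⟨f a, hs a⟩
  inj' _ _ h := f.injective (congrArg Subtype.val h)
  map_rel_iff' := f.map_rel_iff

lemma Embedding.neighborSet_nontrivial (f : H ↪g G) {a : W} (h : (H.neighborSet a).Nontrivial) :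
    (G.neighborSet (f a)).Nontrivial :=
  (h.image f.injective).mono <| Set.image_subset_iff.2 fun _ hb => f.map_adj_iff.2 hb

lemma IsIndContained.lam (hdeg : ∀ a, (H.neighborSet a).Nontrivial) : H ⊴ G → H ⊴ lam G :=
  fun ⟨f⟩ => ⟨f.codRestrict fun a =>
    not_isLeaf_of_neighborSet_nontrivial (f.neighborSet_nontrivial (hdeg a))⟩

lemma IsIndContained.rho (hsib : ∀ a b, Sibling H a b → a = b) : H ⊴ G → H ⊴ rho G :=
  fun ⟨f⟩ => ⟨f.toRho hsib⟩

lemma isIndContained_redStep_iff (hdeg : ∀ a, (H.neighborSet a).Nontrivial)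
    (hsib : ∀ a b, Sibling H a b → a = b) (X : FinGraph) : H ⊴ (redStep X).G ↔ H ⊴ X.G :=
  ⟨fun h => (h.trans ⟨rhoEmbedding _⟩).trans ⟨Embedding.induce _⟩,
    fun h => (h.lam hdeg).rho hsib⟩

lemma isIndContained_redStep_iterate_iff (hdeg : ∀ a, (H.neighborSet a).Nontrivial)
    (hsib : ∀ a b, Sibling H a b → a = b) (X : FinGraph) (k : ℕ) :
    H ⊴ (redStep^[k] X).G ↔ H ⊴ X.G := by
  induction k with
  | zero => rfl
  | succ k ih => rw [Function.iterate_succ_apply', isIndContained_redStep_iff hdeg hsib, ih]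

lemma hasInducedCycle_iff_isIndContained {n : ℕ} : HasInducedCycle G n ↔ cycleGraph n ⊴ G := by
  rw [isIndContained_iff_exists_iso_induce]
  exact exists_congr fun _ => ⟨fun ⟨e⟩ => ⟨e.symm⟩, fun ⟨e⟩ => ⟨e.symm⟩⟩

open Fin.CommRing in
lemma cycleGraph_neighborSet_nontrivial {n : ℕ} (hn : 3 ≤ n) (v : Fin n) :
    ((cycleGraph n).neighborSet v).Nontrivial := by
  obtain ⟨m, rfl⟩ : ∃ m, n = m + 3 := ⟨n - 3, by omega⟩
  rw [cycleGraph_neighborSet]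
  refine Set.nontrivial_pair fun h => ?_
  rw [sub_eq_iff_eq_add, add_assoc, left_eq_add] at h
  norm_num [Fin.ext_iff, Nat.mod_eq_of_lt] at h

open Fin.CommRing in
lemma eq_of_sibling_cycleGraph {n : ℕ} (hn : 4 ≤ n) {a b : Fin n}
    (h : Sibling (cycleGraph n) a b) : a = b := by
  obtain ⟨m, rfl⟩ : ∃ m, n = m + 4 := ⟨n - 4, by omega⟩
  -- `c + 2` is a neighbor of `c + 1` outside the closed neighborhood of `c`
  have not_sibling_succ (c : Fin (m + 4)) : ¬ Sibling (cycleGraph (m + 4)) c (c + 1) := by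
    intro hc
    have hmem : c + 2 ∈ closedNbhd (cycleGraph (m + 4)) (c + 1) :=
      Or.inr (cycleGraph_adj.2 (Or.inr (by ring)))
    rw [← hc, mem_closedNbhd, cycleGraph_adj] at hmem
    norm_num [neg_eq_iff_add_eq_zero, Fin.ext_iff, Nat.mod_eq_of_lt] at hmem
  have hb : b ∈ closedNbhd (cycleGraph (m + 4)) a := h ▸ Or.inl rfl
  rcases hb with rfl | hb
  · rfl
  rcases cycleGraph_adj.1 hb with hb | hb
  · exact (not_sibling_succ b (sub_eq_iff_eq_add'.1 hb ▸ h.symm)).elim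
  · exact (not_sibling_succ a (sub_eq_iff_eq_add'.1 hb ▸ h)).elim

end SimpleGraph

theorem hasInducedCycle_iff_reduction_general {V : Type} [Fintype V] (G : SimpleGraph V)
    (n : ℕ) (hn : 4 ≤ n) :
    HasInducedCycle G n ↔ HasInducedCycle (reduction ⟨V, G⟩).G n := by
  simp only [hasInducedCycle_iff_isIndContained, reduction]
  exact (isIndContained_redStep_iterate_iff (cycleGraph_neighborSet_nontrivial (by omega))
    (fun _ _ => eq_of_sibling_cycleGraph hn) ⟨V, G⟩ _).symm

/-- For `n ≥ 4`, a connected graph `G` (other than `K2`) contains an induced `n`-cycle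
if and only if the reduction of `G` contains an induced `n`-cycle. -/
theorem hasInducedCycle_iff_reduction {V : Type} [Fintype V] (G : SimpleGraph V)
    (hc : G.Connected) (hK2 : ¬ Nonempty (G ≃g K2)) (n : ℕ) (hn : 4 ≤ n) :
    HasInducedCycle G n ↔ HasInducedCycle (reduction ⟨V, G⟩).G n :=
  hasInducedCycle_iff_reduction_general G n hn
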